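/- arXiv:1004.3675 — 4 statements merged into one kernel-verified Lean document; each statement's English description precedes it below -/
import Mathlib

section
/- Let A be a commutative ring and n a natural number such that n is invertible in A. Set s = (1+t)^n - 1 in the formal power series ring A[[t]]. Then there exists a power series f with zero constant term such that 1 + s = (1 + f(s))^n in A[[t]] (where f(s) denotes substitution of s into f). -/
/-!
The linear coefficient of `s = (1 + t)^n - 1` is `n`, a unit, so `s` has a compositional
inverse `f` with `f(s) = t`; then `(1 + f(s))^n = (1 + t)^n = 1 + s`.
-/

open PowerSeries

/-- Substitution of a power series `s` (with nilpotent/zero constant term) into `f`: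
the `m`-th coefficient of `f(s)` is `∑_{n ≤ m} (coeff n f) * (coeff m (s^n))`. -/
noncomputable def PowerSeries.substitute {A : Type*} [CommRing A]
    (s f : PowerSeries A) : PowerSeries A :=
  PowerSeries.mk fun m =>
    ∑ n ∈ Finset.range (m + 1), (PowerSeries.coeff n f) * (PowerSeries.coeff m (s ^ n))

namespace PowerSeries

variable {A : Type*} [CommRing A]

theorem coeff_pow_eq_zero_of_lt {s : A⟦X⟧} (hs : constantCoeff s = 0) {m k : ℕ} (h : m < k) :
    coeff m (s ^ k) = 0 :=
  coeff_of_lt_order _ <| (Nat.cast_lt.mpr h).trans_le (le_order_pow_of_constantCoeff_eq_zero k hs)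

theorem substitute_eq_subst {s : A⟦X⟧} (hs : constantCoeff s = 0) (f : A⟦X⟧) :
    substitute s f = f.subst s := by
  ext m
  rw [substitute, coeff_mk, coeff_subst' (.of_constantCoeff_zero' hs),
    finsum_eq_sum_of_support_subset _ (s := Finset.range (m + 1))]
  · rfl
  · intro k hk
    rw [Function.mem_support] at hk
    rw [Finset.coe_range, Set.mem_Iio, Nat.lt_succ_iff]
    by_contra! hmk
    exact hk (by rw [coeff_pow_eq_zero_of_lt hs hmk, smul_zero])

theorem exists_substitute_eq_X {s : A⟦X⟧} (hs : constantCoeff s = 0) (hs' : IsUnit (coeff 1 s)) :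
    ∃ f : A⟦X⟧, constantCoeff f = 0 ∧ substitute s f = X :=
  ⟨s.substInvOfIsUnit hs', constantCoeff_substInvOfIsUnit s hs',
    by rw [substitute_eq_subst hs, subst_substInvOfIsUnit_left s hs hs']⟩

end PowerSeries

/-- Let `A` be a commutative ring and `n` a natural number invertible in `A`.
Set `s = (1+t)^n - 1` in `A[[t]]`. Then there exists a power series `f` with
zero constant term such that `1 + s = (1 + f(s))^n`. -/
theorem exists_nth_root_of_one_add {A : Type*} [CommRing A] (n : ℕ)
    (hn : IsUnit (n : A)) :
    ∃ f : PowerSeries A,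
      PowerSeries.constantCoeff f = 0 ∧
      1 + ((1 + PowerSeries.X) ^ n - 1) =
        (1 + PowerSeries.substitute ((1 + PowerSeries.X : PowerSeries A) ^ n - 1) f) ^ n := by
  have hs : constantCoeff ((1 + X : A⟦X⟧) ^ n - 1) = 0 := by simp
  have hs' : coeff 1 ((1 + X : A⟦X⟧) ^ n - 1) = (n : A) := by simp [coeff_one_pow]
  obtain ⟨f, hf, hfX⟩ := exists_substitute_eq_X hs (hs' ▸ hn)
  exact ⟨f, hf, by rw [hfX, add_sub_cancel]⟩
end

section
/- For all integers a, b: if 39 divides a² + ab + 2b², then 3 divides both a and b, 13 divides both a and b, and consequently 39² divides a² + ab + 2b². -/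
lemma zmod3_aux : ∀ x y : ZMod 3, x ^ 2 + x * y + 2 * y ^ 2 = 0 → x = 0 ∧ y = 0 := by decide

lemma zmod13_aux : ∀ x y : ZMod 13, x ^ 2 + x * y + 2 * y ^ 2 = 0 → x = 0 ∧ y = 0 := by decide

/-- If `39 ∣ a² + ab + 2b²` (the norm form of the ring of integers of `ℚ(√-7)`),
then `3` and `13` divide both `a` and `b`, and `39² ∣ a² + ab + 2b²`. -/
theorem norm_form_39_dvd (a b : ℤ) (h : (39 : ℤ) ∣ a ^ 2 + a * b + 2 * b ^ 2) :
    (3 : ℤ) ∣ a ∧ (3 : ℤ) ∣ b ∧ (13 : ℤ) ∣ a ∧ (13 : ℤ) ∣ b ∧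
      (39 ^ 2 : ℤ) ∣ a ^ 2 + a * b + 2 * b ^ 2 := by
  have h3 : (3 : ℤ) ∣ a ^ 2 + a * b + 2 * b ^ 2 := dvd_trans ⟨13, by norm_num⟩ h
  have h13 : (13 : ℤ) ∣ a ^ 2 + a * b + 2 * b ^ 2 := dvd_trans ⟨3, by norm_num⟩ h
  have c3 : ((a : ZMod 3)) = 0 ∧ ((b : ZMod 3)) = 0 := by
    apply zmod3_aux
    have := (ZMod.intCast_zmod_eq_zero_iff_dvd _ 3).mpr h3
    push_cast at this ⊢
    exact this
  have c13 : ((a : ZMod 13)) = 0 ∧ ((b : ZMod 13)) = 0 := by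
    apply zmod13_aux
    have := (ZMod.intCast_zmod_eq_zero_iff_dvd _ 13).mpr h13
    push_cast at this ⊢
    exact this
  have d3a : (3 : ℤ) ∣ a := (ZMod.intCast_zmod_eq_zero_iff_dvd _ 3).mp c3.1
  have d3b : (3 : ℤ) ∣ b := (ZMod.intCast_zmod_eq_zero_iff_dvd _ 3).mp c3.2
  have d13a : (13 : ℤ) ∣ a := (ZMod.intCast_zmod_eq_zero_iff_dvd _ 13).mp c13.1
  have d13b : (13 : ℤ) ∣ b := (ZMod.intCast_zmod_eq_zero_iff_dvd _ 13).mp c13.2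
  refine ⟨d3a, d3b, d13a, d13b, ?_⟩
  obtain ⟨x, hx⟩ : (39 : ℤ) ∣ a := by omega
  obtain ⟨y, hy⟩ : (39 : ℤ) ∣ b := by omega
  subst hx hy
  exact ⟨x ^ 2 + x * y + 2 * y ^ 2, by ring⟩
end

section
/- The only solution in integers a, b, a positive integer N, and a prime p of the equation 273 = 7·(a² + ab + 2b²) + 39·N·p is a = 0, b = 0, N = 1, p = 7. -/
/-- The only solution in integers `a, b`, a positive integer `N` and a prime `p`
of `273 = 7·(a² + ab + 2b²) + 39·N·p` is `a = 0`, `b = 0`, `N = 1`, `p = 7`. -/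
theorem diophantine_273 (a b : ℤ) (N p : ℕ) (hN : 0 < N) (hp : p.Prime) :
    (273 : ℤ) = 7 * (a ^ 2 + a * b + 2 * b ^ 2) + 39 * (N : ℤ) * (p : ℤ) ↔
      a = 0 ∧ b = 0 ∧ N = 1 ∧ p = 7 := by
  constructor
  · intro h
    have hq0 : 0 ≤ a ^ 2 + a * b + 2 * b ^ 2 := by
      nlinarith [sq_nonneg (2 * a + b), sq_nonneg b]
    have hdvd : (7 : ℤ) ∣ 39 * ((N : ℤ) * (p : ℤ)) := by
      refine ⟨39 - (a ^ 2 + a * b + 2 * b ^ 2), by linarith⟩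
    have hdvdN : 7 ∣ 39 * (N * p) := by exact_mod_cast hdvd
    have h7 : 7 ∣ N * p := (Nat.Coprime.dvd_of_dvd_mul_left (by decide) hdvdN)
    have hle : (N : ℤ) * p ≤ 7 := by nlinarith
    have hleN : N * p ≤ 7 := by exact_mod_cast hle
    have hm : N * p = 7 := Nat.le_antisymm hleN (Nat.le_of_dvd (Nat.mul_pos hN hp.pos) h7)
    have hp7 : p = 7 := by
      have : p ∣ 7 := ⟨N, by rw [← hm]; ring⟩
      exact (Nat.prime_dvd_prime_iff_eq hp (by norm_num)).mp this
    have hN1 : N = 1 := by rw [hp7] at hm; omega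
    have hq : a ^ 2 + a * b + 2 * b ^ 2 = 0 := by
      subst hp7 hN1; push_cast at h; linarith
    have hb : b = 0 := by nlinarith [sq_nonneg (2 * a + b), sq_nonneg b]
    have ha : a = 0 := by nlinarith
    exact ⟨ha, hb, hN1, hp7⟩
  · rintro ⟨rfl, rfl, rfl, rfl⟩
    norm_num
end

section
/- The 3-adic valuation of the discriminant of the polynomial 7x⁴ + 79x³ + 311x² + 497x + 277 equals 2, and its 13-adic valuation equals 3. -/
open Polynomial

/-- The Sylvester matrix of two polynomials `p` and `q`. -/
noncomputable def sylvester {R : Type*} [CommRing R] (p q : Polynomial R) :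
    Matrix (Fin (p.natDegree + q.natDegree)) (Fin (p.natDegree + q.natDegree)) R :=
  fun i j =>
    if (i : ℕ) < q.natDegree then
      if (i : ℕ) ≤ (j : ℕ) ∧ (j : ℕ) ≤ (i : ℕ) + p.natDegree then
        p.coeff (p.natDegree + (i : ℕ) - (j : ℕ)) else 0
    else
      if (i : ℕ) - q.natDegree ≤ (j : ℕ) ∧ (j : ℕ) ≤ ((i : ℕ) - q.natDegree) + q.natDegree then
        q.coeff (q.natDegree + ((i : ℕ) - q.natDegree) - (j : ℕ)) else 0

/-- The resultant of two integer polynomials. -/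
noncomputable def resultant (p q : Polynomial ℤ) : ℤ :=
  (_root_.sylvester p q).det

/-- The discriminant of an integer polynomial:
`disc p = (-1)^(n(n-1)/2) · Res(p, p') / lc(p)` (the division is exact). -/
noncomputable def disc (p : Polynomial ℤ) : ℤ :=
  ((-1) ^ (p.natDegree * (p.natDegree - 1) / 2) * _root_.resultant p (derivative p)) / p.leadingCoeff

/-!
The discriminant is computed exactly. The Sylvester matrix of the quartic `P` and `P'` is an
explicit `7 × 7` integer matrix whose determinant, by cofactor expansion, is `7 · 3² · 13³`; the
sign `(-1)^(4·3/2)` is `1` and the leading coefficient is `7`, so `disc P = 3² · 13³`.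
-/

/-- The index type `Fin (p.natDegree + q.natDegree)` changes when the degrees are replaced by
numerals, so the comparison is between determinants. -/
theorem det_sylvester_of_natDegree_eq {R : Type*} [CommRing R] {p q : R[X]} {m n : ℕ}
    (hp : p.natDegree = m) (hq : q.natDegree = n) :
    (_root_.sylvester p q).det = (Matrix.of fun i j : Fin (m + n) =>
      if (i : ℕ) < n then
        if (i : ℕ) ≤ j ∧ (j : ℕ) ≤ i + m then p.coeff (m + i - j) else 0
      else if (i : ℕ) - n ≤ j ∧ (j : ℕ) ≤ i - n + n then q.coeff (n + (i - n) - j) else 0).det := by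
  subst hp hq
  rfl

noncomputable abbrev quartic : ℤ[X] := 7*X^4 + 79*X^3 + 311*X^2 + 497*X + 277

theorem coeff_quartic (k : ℕ) : quartic.coeff k = [277, 497, 311, 79, 7].getD k 0 := by
  rcases k with _ | _ | _ | _ | _ | k <;> simp [coeff_X, coeff_X_pow, coeff_ofNat_succ]

theorem natDegree_quartic : quartic.natDegree = 4 := by
  unfold quartic
  compute_degree!

def sylvesterQuartic : Matrix (Fin 7) (Fin 7) ℤ :=
  !![7, 79, 311, 497, 277, 0, 0;
     0, 7, 79, 311, 497, 277, 0;
     0, 0, 7, 79, 311, 497, 277;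
     28, 237, 622, 497, 0, 0, 0;
     0, 28, 237, 622, 497, 0, 0;
     0, 0, 28, 237, 622, 497, 0;
     0, 0, 0, 28, 237, 622, 497]

theorem resultant_quartic_derivative :
    _root_.resultant quartic (derivative quartic) = sylvesterQuartic.det := by
  have hd : (derivative quartic).natDegree = 3 := by rw [natDegree_derivative, natDegree_quartic]
  rw [_root_.resultant, det_sylvester_of_natDegree_eq natDegree_quartic hd]
  congr 1
  ext i j
  simp only [Matrix.of_apply, coeff_derivative, coeff_quartic]
  fin_cases i <;> fin_cases j <;> decide

set_option maxRecDepth 10000 in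
theorem det_sylvesterQuartic : sylvesterQuartic.det = 7 * (3 ^ 2 * 13 ^ 3) := by
  simp [sylvesterQuartic, Matrix.det_succ_row_zero, Fin.sum_univ_succ, Fin.succAbove]

theorem disc_quartic : disc quartic = 3 ^ 2 * 13 ^ 3 := by
  rw [disc, natDegree_quartic, leadingCoeff, natDegree_quartic, coeff_quartic,
    resultant_quartic_derivative, det_sylvesterQuartic]
  norm_num

/-- The discriminant of `7x⁴ + 79x³ + 311x² + 497x + 277` has `3`-adic valuation `2`
and `13`-adic valuation `3`. -/
theorem disc_valuations_pR :
    padicValInt 3 (disc (7*X^4 + 79*X^3 + 311*X^2 + 497*X + 277 : Polynomial ℤ)) = 2 ∧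
    padicValInt 13 (disc (7*X^4 + 79*X^3 + 311*X^2 + 497*X + 277 : Polynomial ℤ)) = 3 := by
  have : Fact (Nat.Prime 13) := ⟨by norm_num⟩
  rw [disc_quartic, show (3 ^ 2 * 13 ^ 3 : ℤ) = ((3 ^ 2 * 13 ^ 3 : ℕ) : ℤ) by norm_num,
    padicValInt.of_nat]
  exact ⟨padicValNat_mul_pow_left 2 3 (by norm_num), padicValNat_mul_pow_right 2 3 (by norm_num)⟩
end
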